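/- arXiv:1208.1825 — 4 statements merged into one kernel-verified Lean document; each statement's English description precedes it below -/
import Mathlib

section
/- Let ψ : ℕ → ℕ be increasing, let ε ∈ (0,1), and let n ≥ 1 satisfy ε·ψ(n+1) > log 2. Then for any (a_1, …, a_n) ∈ ℕ_{≥1}^n with (1-ε)·ψ(n) < ∑_{j=1}^n log a_j < (1+ε)·ψ(n), there exists a positive integer a_{n+1} such that (1-ε)·ψ(n+1) < ∑_{j=1}^{n+1} log a_j < (1+ε)·ψ(n+1). (One may take a_{n+1} = 1 if ∑_{j=1}^n log a_j > (1-ε)ψ(n+1), and a_{n+1} = ⌊e^{ψ(n+1)}/(a_1⋯a_n)⌋ otherwise.) -/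
open Filter Topology MeasureTheory Set
open scoped ENNReal

/-- The Gauss map `T(x) = 1/x mod 1`, with `T(0) = 0`. -/
noncomputable def gaussMap (x : ℝ) : ℝ := Int.fract x⁻¹

/-- The `n`-th partial quotient (1-indexed): `a₁(x) = ⌊1/x⌋`, `aₙ(x) = a₁(T^[n-1] x)`. -/
noncomputable def cfA (n : ℕ) (x : ℝ) : ℕ := ⌊(gaussMap^[n - 1] x)⁻¹⌋₊

/-- Denominators of convergents: `q₀ = 1`, `q₁ = a₁`, `qₙ = aₙ q_{n-1} + q_{n-2}`
(from the 1-indexed sequence `a` of partial quotients). -/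
def qd (a : ℕ → ℕ) : ℕ → ℕ
  | 0 => 1
  | 1 => a 1
  | n + 2 => a (n + 2) * qd a (n + 1) + qd a n

/-- Numerators of convergents: `p₀ = 0`, `p₁ = 1`, `pₙ = aₙ p_{n-1} + p_{n-2}`. -/
def pd (a : ℕ → ℕ) : ℕ → ℕ
  | 0 => 0
  | 1 => 1
  | n + 2 => a (n + 2) * pd a (n + 1) + pd a n

/-- The cylinder `Iₙ(a₁, …, aₙ) = {x ∈ [0,1) : a₁(x) = a₁, …, aₙ(x) = aₙ}`. -/
noncomputable def cyl (n : ℕ) (a : ℕ → ℕ) : Set ℝ :=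
  {x | x ∈ Set.Ico (0 : ℝ) 1 ∧ ∀ j, 1 ≤ j → j ≤ n → cfA j x = a j}

/-- `E(ψ)`: the set of irrationals in `[0,1)` with `(1/ψ(n)) ∑_{j=1}^n log aⱼ(x) → 1`. -/
noncomputable def Eset (ψ : ℕ → ℕ) : Set ℝ :=
  {x | x ∈ Set.Ico (0 : ℝ) 1 ∧ Irrational x ∧
    Tendsto (fun n => (∑ j ∈ Finset.Icc 1 n, Real.log (cfA j x)) / (ψ n : ℝ))
      atTop (𝓝 1)}

/-- The Riemann zeta function `ζ(t) = ∑_{k≥1} k^{-t}` as a real series. -/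
noncomputable def zetaR (t : ℝ) : ℝ := ∑' (k : ℕ+), (k : ℝ) ^ (-t)

/-- Extend a tuple `(a₁, …, aₙ)` of positive integers to a 1-indexed sequence `ℕ → ℕ`. -/
def seqOf (n : ℕ) (v : Fin n → ℕ+) : ℕ → ℕ :=
  fun j => if h : 1 ≤ j ∧ j ≤ n then (v ⟨j - 1, by omega⟩ : ℕ) else 1
/-- every tuple in `Dₙ(ε)` extends to a tuple in `D_{n+1}(ε)`. -/
theorem exists_extension_in_D (ψ : ℕ → ℕ) (hmono : Monotone ψ)
    (ε : ℝ) (hε : ε ∈ Set.Ioo (0 : ℝ) 1) (n : ℕ) (hn : 1 ≤ n)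
    (hbig : Real.log 2 < ε * (ψ (n + 1) : ℝ))
    (a : ℕ → ℕ) (ha : ∀ j, 1 ≤ j → j ≤ n → 1 ≤ a j)
    (hlo : (1 - ε) * (ψ n : ℝ) < ∑ j ∈ Finset.Icc 1 n, Real.log (a j))
    (hhi : ∑ j ∈ Finset.Icc 1 n, Real.log (a j) < (1 + ε) * (ψ n : ℝ)) :
    ∃ b : ℕ, 1 ≤ b ∧
      (1 - ε) * (ψ (n + 1) : ℝ) <
        (∑ j ∈ Finset.Icc 1 n, Real.log (a j)) + Real.log b ∧
      (∑ j ∈ Finset.Icc 1 n, Real.log (a j)) + Real.log b < (1 + ε) * (ψ (n + 1) : ℝ) := by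
  have hψ : (ψ n : ℝ) ≤ (ψ (n+1) : ℝ) := by exact_mod_cast hmono (Nat.le_succ n)
  set S := ∑ j ∈ Finset.Icc 1 n, Real.log (a j) with hS
  have hεψ : Real.log 2 < ε * (ψ (n+1) : ℝ) := hbig
  have hlog2 : (0:ℝ) < Real.log 2 := Real.log_pos (by norm_num)
  by_cases hc : (1 - ε) * (ψ (n+1) : ℝ) < S
  · refine ⟨1, le_refl 1, ?_, ?_⟩
    · simpa using hc
    · have h1 : S < (1 + ε) * (ψ (n+1) : ℝ) := by nlinarith [hε.1]
      simpa using h1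
  · push_neg at hc
    set t := (1 - ε) * (ψ (n+1) : ℝ) - S with ht
    have ht0 : 0 ≤ t := by linarith
    refine ⟨⌊Real.exp t⌋₊ + 1, Nat.le_add_left 1 _, ?_, ?_⟩
    · have hbe : Real.exp t < ((⌊Real.exp t⌋₊ + 1 : ℕ) : ℝ) := by
        have := Nat.lt_floor_add_one (Real.exp t)
        push_cast; linarith
      have : t < Real.log ((⌊Real.exp t⌋₊ + 1 : ℕ) : ℝ) := by
        calc t = Real.log (Real.exp t) := (Real.log_exp t).symm
        _ < _ := Real.log_lt_log (Real.exp_pos t) hbe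
      linarith
    · have h1 : (1:ℝ) ≤ Real.exp t := Real.one_le_exp ht0
      have hfl : (⌊Real.exp t⌋₊ : ℝ) ≤ Real.exp t := Nat.floor_le (Real.exp_pos t).le
      have hbu : ((⌊Real.exp t⌋₊ + 1 : ℕ) : ℝ) ≤ 2 * Real.exp t := by push_cast; linarith
      have hbpos : (0:ℝ) < ((⌊Real.exp t⌋₊ + 1 : ℕ) : ℝ) := by positivity
      have hlb : Real.log ((⌊Real.exp t⌋₊ + 1 : ℕ) : ℝ) ≤ Real.log 2 + t := by
        calc Real.log _ ≤ Real.log (2 * Real.exp t) := Real.log_le_log hbpos hbu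
        _ = Real.log 2 + t := by
            rw [Real.log_mul (by norm_num) (Real.exp_ne_zero t), Real.log_exp]
      linarith
end

section
/- Let ψ : ℕ → ℕ, let b > 1, let ε ∈ (0,1), and let n ≥ 1 satisfy ψ(n+1) ≥ b(1-ε)·ψ(n) and n ≤ ε·ψ(n). Suppose (a_1, …, a_n) ∈ ℕ_{≥1}^n satisfies (1-ε)·ψ(n) < ∑_{j=1}^n log a_j < (1+ε)·ψ(n), and a_{n+1} ∈ ℕ_{≥1} satisfies (1-ε)·ψ(n+1) < ∑_{j=1}^{n+1} log a_j < (1+ε)·ψ(n+1). Then log a_{n+1} ≥ (1-ε)·(b(1-ε)²/(1+ε) − 1)·log q_n(a_1, …, a_n). -/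
open Filter Topology MeasureTheory Set
open scoped ENNReal

/-!
Since `qₙ ≤ ∏ⱼ (aⱼ + 1) ≤ 2ⁿ ∏ⱼ aⱼ`, the hypothesis `n ≤ ε ψ(n)` gives
`(1 - ε) log qₙ ≤ (1 - ε)(1 + 2ε) ψ(n) ≤ (1 + ε) ψ(n)`. On the other hand, subtracting the upper
bound on `∑_{j ≤ n} log aⱼ` from the lower bound on `∑_{j ≤ n+1} log aⱼ` and using
`ψ(n+1) ≥ b(1-ε)ψ(n)` gives `log aₙ₊₁ > (b(1-ε)² - (1+ε)) ψ(n)`, which is `(1+ε) ψ(n)` times the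
factor `b(1-ε)²/(1+ε) - 1`.
-/

lemma qd_le_prod_add_one (a : ℕ → ℕ) (n : ℕ) : qd a n ≤ ∏ j ∈ Finset.Icc 1 n, (a j + 1) := by
  have prod_succ (k : ℕ) : ∏ j ∈ Finset.Icc 1 (k + 1), (a j + 1) =
      (∏ j ∈ Finset.Icc 1 k, (a j + 1)) * (a (k + 1) + 1) :=
    Finset.prod_Icc_succ_top (by omega) _
  induction n using Nat.twoStepInduction with
  | zero => simp [qd]
  | one => simp [qd]
  | more m ih₀ ih₁ =>
    have hmono : ∏ j ∈ Finset.Icc 1 m, (a j + 1) ≤ ∏ j ∈ Finset.Icc 1 (m + 1), (a j + 1) := by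
      rw [prod_succ]
      exact Nat.le_mul_of_pos_right _ (Nat.succ_pos _)
    calc qd a (m + 2) = a (m + 2) * qd a (m + 1) + qd a m := rfl
      _ ≤ a (m + 2) * ∏ j ∈ Finset.Icc 1 (m + 1), (a j + 1) +
          ∏ j ∈ Finset.Icc 1 (m + 1), (a j + 1) := by
        gcongr
        exact ih₀.trans hmono
      _ = ∏ j ∈ Finset.Icc 1 (m + 2), (a j + 1) := by
        rw [prod_succ (m + 1)]
        ring

/-- For `k = 0` this holds because `Real.log 0 = 0`. -/
lemma log_natCast_add_one_le (k : ℕ) : Real.log (k + 1) ≤ Real.log k + Real.log 2 := by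
  rcases Nat.eq_zero_or_pos k with rfl | hk
  · simpa using Real.log_nonneg one_le_two
  · have hk' : (1 : ℝ) ≤ k := by exact_mod_cast hk
    rw [← Real.log_mul (by positivity) two_ne_zero]
    exact Real.log_le_log (by positivity) (by linarith)

lemma log_qd_le (a : ℕ → ℕ) (n : ℕ) :
    Real.log (qd a n) ≤ n * Real.log 2 + ∑ j ∈ Finset.Icc 1 n, Real.log (a j) := by
  have hprod : Real.log (qd a n) ≤ Real.log (∏ j ∈ Finset.Icc 1 n, ((a j : ℝ) + 1)) := by
    rcases Nat.eq_zero_or_pos (qd a n) with h | h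
    · rw [h, Nat.cast_zero, Real.log_zero]
      exact Real.log_nonneg (Finset.one_le_prod fun j _ => by simp)
    · exact Real.log_le_log (by exact_mod_cast h) (by exact_mod_cast qd_le_prod_add_one a n)
  calc Real.log (qd a n) ≤ ∑ j ∈ Finset.Icc 1 n, Real.log ((a j : ℝ) + 1) := by
        rwa [Real.log_prod fun j _ => by positivity] at hprod
    _ ≤ ∑ j ∈ Finset.Icc 1 n, (Real.log (a j) + Real.log 2) :=
        Finset.sum_le_sum fun j _ => log_natCast_add_one_le (a j)
    _ = n * Real.log 2 + ∑ j ∈ Finset.Icc 1 n, Real.log (a j) := by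
        rw [Finset.sum_add_distrib, Finset.sum_const, Nat.card_Icc, nsmul_eq_mul]
        simp only [add_tsub_cancel_right]
        ring

theorem log_a_succ_ge_general (ψ : ℕ → ℕ) (b ε : ℝ) (hε : ε ∈ Set.Ioo (0 : ℝ) 1)
    (n : ℕ)
    (hpsi1 : b * (1 - ε) * (ψ n : ℝ) ≤ (ψ (n + 1) : ℝ))
    (hpsi2 : (n : ℝ) ≤ ε * (ψ n : ℝ))
    (a : ℕ → ℕ)
    (hhi : ∑ j ∈ Finset.Icc 1 n, Real.log (a j) < (1 + ε) * (ψ n : ℝ))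
    (hlo' : (1 - ε) * (ψ (n + 1) : ℝ) < ∑ j ∈ Finset.Icc 1 (n + 1), Real.log (a j)) :
    (1 - ε) * (b * (1 - ε) ^ 2 / (1 + ε) - 1) * Real.log (qd a n) ≤
      Real.log (a (n + 1)) := by
  obtain ⟨hε₀, hε₁⟩ := hε
  have hlog_qd : (1 - ε) * Real.log (qd a n) ≤ (1 + ε) * ψ n := by
    have hn_log_two : (n : ℝ) * Real.log 2 ≤ ε * ψ n := by
      nlinarith [Real.log_two_lt_d9, Real.log_pos one_lt_two, (Nat.cast_nonneg n : (0 : ℝ) ≤ n)]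
    calc (1 - ε) * Real.log (qd a n) ≤ (1 - ε) * ((1 + 2 * ε) * ψ n) := by
          gcongr
          linarith [log_qd_le a n]
      _ ≤ (1 + ε) * ψ n := by nlinarith [(Nat.cast_nonneg (ψ n) : (0 : ℝ) ≤ ψ n)]
  have hlog_a : (b * (1 - ε) ^ 2 - (1 + ε)) * ψ n < Real.log (a (n + 1)) := by
    rw [Finset.sum_Icc_succ_top (by omega)] at hlo'
    nlinarith
  set d := b * (1 - ε) ^ 2 / (1 + ε) - 1 with hd
  rcases le_total d 0 with hd_nonpos | hd_nonneg
  · calc (1 - ε) * d * Real.log (qd a n) ≤ 0 :=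
          mul_nonpos_of_nonpos_of_nonneg
            (mul_nonpos_of_nonneg_of_nonpos (by linarith) hd_nonpos) (Real.log_natCast_nonneg _)
      _ ≤ Real.log (a (n + 1)) := Real.log_natCast_nonneg _
  · calc (1 - ε) * d * Real.log (qd a n) = d * ((1 - ε) * Real.log (qd a n)) := by ring
      _ ≤ d * ((1 + ε) * ψ n) := by gcongr
      _ = (b * (1 - ε) ^ 2 - (1 + ε)) * ψ n := by
        rw [hd]
        field_simp
      _ ≤ Real.log (a (n + 1)) := hlog_a.le

/-- lower bound on `log a_{n+1}` in terms of `log qₙ` for tuples in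
`Dₙ(ε)` extending into `D_{n+1}(ε)`, along indices with `ψ(n+1) ≥ b(1-ε)ψ(n)` and
`n ≤ ε ψ(n)`. -/
theorem log_a_succ_ge (ψ : ℕ → ℕ) (b ε : ℝ) (hb : 1 < b) (hε : ε ∈ Set.Ioo (0 : ℝ) 1)
    (n : ℕ) (hn : 1 ≤ n)
    (hpsi1 : b * (1 - ε) * (ψ n : ℝ) ≤ (ψ (n + 1) : ℝ))
    (hpsi2 : (n : ℝ) ≤ ε * (ψ n : ℝ))
    (a : ℕ → ℕ) (ha : ∀ j, 1 ≤ j → j ≤ n + 1 → 1 ≤ a j)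
    (hlo : (1 - ε) * (ψ n : ℝ) < ∑ j ∈ Finset.Icc 1 n, Real.log (a j))
    (hhi : ∑ j ∈ Finset.Icc 1 n, Real.log (a j) < (1 + ε) * (ψ n : ℝ))
    (hlo' : (1 - ε) * (ψ (n + 1) : ℝ) < ∑ j ∈ Finset.Icc 1 (n + 1), Real.log (a j))
    (hhi' : ∑ j ∈ Finset.Icc 1 (n + 1), Real.log (a j) < (1 + ε) * (ψ (n + 1) : ℝ)) :
    (1 - ε) * (b * (1 - ε) ^ 2 / (1 + ε) - 1) * Real.log (qd a n) ≤
      Real.log (a (n + 1)) :=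
  log_a_succ_ge_general ψ b ε hε n hpsi1 hpsi2 a hhi hlo'
end

section
/- For any ε > 0 and any n ≥ 1, the sum of q_n(a_1, …, a_n)^{-(1+ε)} over all tuples (a_1, …, a_n) ∈ ℕ_{≥1}^n satisfying (ε/2)·∑_{j=1}^n log a_j ≥ n·log ζ(1+ε/2) is at most 1, where ζ(t) = ∑_{k=1}^∞ k^{-t}. -/
open Filter Topology MeasureTheory Set
open scoped ENNReal

/-! Since `qₙ ≥ P := a₁⋯aₙ`, each term is at most
`P^{-(1+ε)} = P^{-ε/2} · ∏ aⱼ^{-(1+ε/2)}`, and the constraint says exactly `P^{ε/2} ≥ ζ(1+ε/2)ⁿ`.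
Summing `∏ aⱼ^{-(1+ε/2)}` over all of `ℕ_{≥1}ⁿ` gives `ζ(1+ε/2)ⁿ`, which cancels. -/

theorem ENNReal.rpow_le_rpow_of_nonpos {x y : ℝ≥0∞} {z : ℝ} (hxy : x ≤ y) (hz : z ≤ 0) :
    y ^ z ≤ x ^ z := by
  simpa only [← ENNReal.rpow_neg, neg_neg] using
    ENNReal.inv_le_inv.2 (ENNReal.rpow_le_rpow hxy (neg_nonneg.2 hz))

theorem ENNReal.tsum_pi_prod_eq_pow {β : Type*} (f : β → ℝ≥0∞) :
    ∀ n : ℕ, ∑' v : Fin n → β, ∏ j, f (v j) = (∑' b, f b) ^ n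
  | 0 => by simp
  | n + 1 => by
    rw [← (Fin.consEquiv fun _ => β).tsum_eq, ENNReal.tsum_prod', pow_succ',
      ← ENNReal.tsum_pi_prod_eq_pow f n, ← ENNReal.tsum_mul_right]
    simp [Fin.consEquiv, Fin.prod_univ_succ, ENNReal.tsum_mul_left]

theorem pow_le_rpow_of_mul_log_le {x y s : ℝ} {n : ℕ} (hx : 0 < x) (hy : 0 < y)
    (h : n * Real.log x ≤ s * Real.log y) : x ^ n ≤ y ^ s := by
  rwa [← Real.log_le_log_iff (by positivity) (by positivity), Real.log_pow, Real.log_rpow hy]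

theorem prod_Icc_le_qd (a : ℕ → ℕ) : ∀ n, ∏ j ∈ Finset.Icc 1 n, a j ≤ qd a n
  | 0 => by simp [qd]
  | 1 => by simp [qd]
  | n + 2 => by
    rw [Finset.prod_Icc_succ_top (by omega), qd]
    have := prod_Icc_le_qd a (n + 1)
    nlinarith

theorem prod_Icc_seqOf (n : ℕ) (v : Fin n → ℕ+) :
    ∏ j ∈ Finset.Icc 1 n, seqOf n v j = ∏ j, (v j : ℕ) := by
  rw [← Finset.Ico_add_one_right_eq_Icc, Finset.prod_Ico_eq_prod_range, Nat.add_sub_cancel,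
    ← Fin.prod_univ_eq_prod_range]
  refine Finset.prod_congr rfl fun j _ => ?_
  rw [seqOf, dif_pos (by omega)]
  simp

theorem prod_le_qd_seqOf (n : ℕ) (v : Fin n → ℕ+) : ∏ j, (v j : ℕ) ≤ qd (seqOf n v) n :=
  prod_Icc_seqOf n v ▸ prod_Icc_le_qd (seqOf n v) n

theorem summable_pnat_rpow_neg {t : ℝ} (ht : 1 < t) :
    Summable fun k : ℕ+ => ((k : ℕ) : ℝ) ^ (-t) :=
  (Real.summable_nat_rpow.2 (by linarith)).comp_injective PNat.coe_injective

theorem one_le_zetaR {t : ℝ} (ht : 1 < t) : 1 ≤ zetaR t := by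
  simpa [zetaR] using (summable_pnat_rpow_neg ht).le_tsum 1 fun k _ => by positivity

theorem ofReal_zetaR {t : ℝ} (ht : 1 < t) :
    ENNReal.ofReal (zetaR t) = ∑' k : ℕ+, ((k : ℕ) : ℝ≥0∞) ^ (-t) := by
  rw [zetaR, ENNReal.ofReal_tsum_of_nonneg (fun k => by positivity) (summable_pnat_rpow_neg ht)]
  refine tsum_congr fun k => ?_
  rw [← ENNReal.ofReal_rpow_of_pos (by positivity), ENNReal.ofReal_natCast]

theorem qd_seqOf_rpow_neg_le {n : ℕ} (v : Fin n → ℕ+) {Z s u : ℝ} (hZ : 0 < Z) (hsu : 0 ≤ s + u)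
    (hv : n * Real.log Z ≤ s * ∑ j, Real.log ((v j : ℕ) : ℝ)) :
    (qd (seqOf n v) n : ℝ≥0∞) ^ (-(s + u)) ≤
      (ENNReal.ofReal Z ^ n)⁻¹ * ∏ j, ((v j : ℕ) : ℝ≥0∞) ^ (-u) := by
  set P := ∏ j, (v j : ℕ)
  have hP : 0 < P := Finset.prod_pos fun j _ => (v j).pos
  have hZP : ENNReal.ofReal Z ^ n ≤ (P : ℝ≥0∞) ^ s := by
    have hlog : ∑ j, Real.log ((v j : ℕ) : ℝ) = Real.log P := by
      rw [Nat.cast_prod, Real.log_prod fun j _ => by positivity]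
    rw [← ENNReal.ofReal_natCast, ENNReal.ofReal_rpow_of_pos (by positivity),
      ← ENNReal.ofReal_pow hZ.le]
    exact ENNReal.ofReal_le_ofReal (pow_le_rpow_of_mul_log_le hZ (by positivity) (hlog ▸ hv))
  calc (qd (seqOf n v) n : ℝ≥0∞) ^ (-(s + u))
      ≤ (P : ℝ≥0∞) ^ (-(s + u)) :=
        ENNReal.rpow_le_rpow_of_nonpos (Nat.cast_le.2 (prod_le_qd_seqOf n v)) (by linarith)
    _ = ((P : ℝ≥0∞) ^ s)⁻¹ * (P : ℝ≥0∞) ^ (-u) := by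
        rw [neg_add, ENNReal.rpow_add _ _ (by positivity) (ENNReal.natCast_ne_top P),
          ENNReal.rpow_neg]
    _ ≤ (ENNReal.ofReal Z ^ n)⁻¹ * (P : ℝ≥0∞) ^ (-u) := by gcongr
    _ = (ENNReal.ofReal Z ^ n)⁻¹ * ∏ j, ((v j : ℕ) : ℝ≥0∞) ^ (-u) := by
        rw [Nat.cast_prod, ENNReal.prod_rpow_of_ne_top fun j _ => ENNReal.natCast_ne_top _]

theorem tsum_qd_rpow_le_one_general (ε : ℝ) (hε : 0 < ε) (n : ℕ) :
    ∑' (v : {v : Fin n → ℕ+ //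
        (n : ℝ) * Real.log (zetaR (1 + ε / 2)) ≤
          ε / 2 * ∑ j, Real.log ((v j : ℕ) : ℝ)}),
      ((qd (seqOf n v.1) n : ℝ≥0∞) ^ (-(1 + ε))) ≤ 1 := by
  have ht : 1 < 1 + ε / 2 := by linarith
  have hζ : 0 < zetaR (1 + ε / 2) := zero_lt_one.trans_le (one_le_zetaR ht)
  set f : ℕ+ → ℝ≥0∞ := fun k => ((k : ℕ) : ℝ≥0∞) ^ (-(1 + ε / 2))
  calc _ ≤ ∑' v : {v : Fin n → ℕ+ // _}, (ENNReal.ofReal (zetaR (1 + ε / 2)) ^ n)⁻¹ *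
          ∏ j, f (v.1 j) :=
        ENNReal.tsum_le_tsum fun v => by
          simpa only [show ε / 2 + (1 + ε / 2) = 1 + ε by ring] using
            qd_seqOf_rpow_neg_le (u := 1 + ε / 2) v.1 hζ (by linarith) v.2
    _ ≤ ∑' v : Fin n → ℕ+, (ENNReal.ofReal (zetaR (1 + ε / 2)) ^ n)⁻¹ * ∏ j, f (v j) :=
        ENNReal.tsum_comp_le_tsum_of_injective Subtype.val_injective _
    _ = 1 := by
        rw [ENNReal.tsum_mul_left, ENNReal.tsum_pi_prod_eq_pow, ← ofReal_zetaR ht]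
        exact ENNReal.inv_mul_cancel (by positivity) (by simp)

/-- the sum of `qₙ^{-(1+ε)}` over all tuples of positive integers with
`(ε/2) ∑ log aⱼ ≥ n log ζ(1+ε/2)` is at most `1`. -/
theorem tsum_qd_rpow_le_one (ε : ℝ) (hε : 0 < ε) (n : ℕ) (hn : 1 ≤ n) :
    ∑' (v : {v : Fin n → ℕ+ //
        (n : ℝ) * Real.log (zetaR (1 + ε / 2)) ≤
          ε / 2 * ∑ j, Real.log ((v j : ℕ) : ℝ)}),
      ((qd (seqOf n v.1) n : ℝ≥0∞) ^ (-(1 + ε))) ≤ 1 :=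
  tsum_qd_rpow_le_one_general ε hε n
end

section
/- Let ψ : ℕ → ℕ be an increasing function with ψ(n)/n → ∞ as n → ∞ (with the convention ψ(0) = 0). Then the irrational number x ∈ (0,1) whose partial quotients are a_n(x) = ⌊e^{ψ(n) − ψ(n−1) + 1}⌋ for every n ≥ 1 satisfies lim_{n→∞} (1/ψ(n)) ∑_{j=1}^n log a_j(x) = 1, i.e., x ∈ E(ψ). -/
open Filter Topology MeasureTheory Set
open scoped ENNReal

/-- for increasing `ψ` with `ψ(0) = 0` and `ψ(n)/n → ∞`, the irrational
`x ∈ (0,1)` with partial quotients `aₙ(x) = ⌊e^{ψ(n) − ψ(n−1) + 1}⌋` lies in `E(ψ)`. -/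
theorem explicit_point_in_Eset (ψ : ℕ → ℕ) (hmono : Monotone ψ) (h0 : ψ 0 = 0)
    (hgrow : Tendsto (fun n => (ψ n : ℝ) / (n : ℝ)) atTop atTop)
    (x : ℝ) (hx : x ∈ Set.Ioo (0 : ℝ) 1) (hirr : Irrational x)
    (hq : ∀ n, 1 ≤ n →
      cfA n x = ⌊Real.exp ((ψ n : ℝ) - (ψ (n - 1) : ℝ) + 1)⌋₊) :
    x ∈ Eset ψ := by
  obtain ⟨hx0, hx1⟩ := hx
  refine ⟨⟨hx0.le, hx1⟩, hirr, ?_⟩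
  set c : ℝ := Real.log (1 - Real.exp (-1)) with hc
  have hepos : (0:ℝ) < 1 - Real.exp (-1) := by
    have : Real.exp (-1) < Real.exp 0 := Real.exp_lt_exp.mpr (by norm_num)
    rw [Real.exp_zero] at this
    linarith
  -- per-term bounds
  have key : ∀ j, 1 ≤ j →
      (ψ j : ℝ) - ψ (j-1) + 1 + c ≤ Real.log (cfA j x) ∧
      Real.log (cfA j x) ≤ (ψ j : ℝ) - ψ (j-1) + 1 := by
    intro j hj
    rw [hq j hj]
    set t : ℝ := (ψ j : ℝ) - ψ (j-1) + 1 with ht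
    have hm : (ψ (j-1) : ℝ) ≤ ψ j := Nat.cast_le.mpr (hmono (by omega))
    have ht1 : 1 ≤ t := by simp only [ht]; linarith
    set y := Real.exp t with hy
    have hye : Real.exp 1 ≤ y := Real.exp_le_exp.mpr ht1
    have hy1 : (1:ℝ) < y := lt_of_lt_of_le (by linarith [Real.add_one_le_exp (1:ℝ)]) hye
    have hypos : (0:ℝ) < y := by linarith
    have hfl_le : (⌊y⌋₊ : ℝ) ≤ y := Nat.floor_le hypos.le
    have hfl_ge : y - 1 ≤ (⌊y⌋₊ : ℝ) := (Nat.sub_one_lt_floor y).le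
    have hflpos : (0:ℝ) < (⌊y⌋₊ : ℝ) := by
      have : y * (1 - Real.exp (-1)) ≤ y - 1 := by
        have h1 : (1:ℝ) ≤ y * Real.exp (-1) := by
          have := mul_le_mul_of_nonneg_right hye (Real.exp_pos (-1)).le
          rwa [← Real.exp_add, add_neg_cancel, Real.exp_zero] at this
        nlinarith
      nlinarith [mul_pos hypos hepos]
    have hprod : y * (1 - Real.exp (-1)) ≤ y - 1 := by
      have h1 : (1:ℝ) ≤ y * Real.exp (-1) := by
        have := mul_le_mul_of_nonneg_right hye (Real.exp_pos (-1)).le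
        rwa [← Real.exp_add, add_neg_cancel, Real.exp_zero] at this
      nlinarith
    constructor
    · calc t + c = Real.log (y * (1 - Real.exp (-1))) := by
            rw [Real.log_mul hypos.ne' hepos.ne', Real.log_exp]
        _ ≤ Real.log (⌊y⌋₊ : ℝ) := by
            apply Real.log_le_log (mul_pos hypos hepos)
            linarith
    · calc Real.log (⌊y⌋₊ : ℝ) ≤ Real.log y := Real.log_le_log hflpos hfl_le
        _ = t := Real.log_exp t
  set S : ℕ → ℝ := fun n => ∑ j ∈ Finset.Icc 1 n, Real.log (cfA j x) with hS
  have tel : ∀ n, ∑ j ∈ Finset.Icc 1 n, ((ψ j : ℝ) - ψ (j-1)) = ψ n := by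
    intro n
    induction n with
    | zero => simp [h0]
    | succ n ih =>
        rw [Finset.sum_Icc_succ_top (by omega : 1 ≤ n+1), ih]
        simp
  have hcard : ∀ n, (Finset.Icc 1 n).card = n := by
    intro n; rw [Nat.card_Icc]; omega
  have hSle : ∀ n, S n ≤ (ψ n : ℝ) + n := by
    intro n
    calc S n ≤ ∑ j ∈ Finset.Icc 1 n, ((ψ j : ℝ) - ψ (j-1) + 1) := by
          apply Finset.sum_le_sum
          intro j hj
          exact (key j (Finset.mem_Icc.mp hj).1).2
      _ = (ψ n : ℝ) + n := by
          rw [Finset.sum_add_distrib, tel, Finset.sum_const, hcard]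
          simp
  have hSge : ∀ n, (ψ n : ℝ) + n * (1 + c) ≤ S n := by
    intro n
    calc (ψ n : ℝ) + n * (1 + c)
        = ∑ j ∈ Finset.Icc 1 n, ((ψ j : ℝ) - ψ (j-1) + 1 + c) := by
          rw [Finset.sum_add_distrib, Finset.sum_add_distrib, tel,
            Finset.sum_const, Finset.sum_const, hcard]
          push_cast; ring
      _ ≤ S n := by
          apply Finset.sum_le_sum
          intro j hj
          exact (key j (Finset.mem_Icc.mp hj).1).1
  have hinv : Tendsto (fun n : ℕ => (n:ℝ) / (ψ n : ℝ)) atTop (𝓝 0) := by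
    exact hgrow.inv_tendsto_atTop.congr (fun n => by simp [Pi.inv_apply, inv_div])
  have hlow : Tendsto (fun n : ℕ => 1 + (1 + c) * ((n:ℝ) / (ψ n : ℝ))) atTop (𝓝 1) := by
    have := (hinv.const_mul (1 + c)).const_add 1
    simpa using this
  have hhigh : Tendsto (fun n : ℕ => 1 + ((n:ℝ) / (ψ n : ℝ))) atTop (𝓝 1) := by
    have := hinv.const_add 1
    simpa using this
  have hev : ∀ᶠ n : ℕ in atTop, (n:ℝ) ≤ ψ n ∧ 1 ≤ n := by
    filter_upwards [hgrow.eventually_ge_atTop 1, Filter.eventually_ge_atTop 1] with n h1 h2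
    refine ⟨?_, h2⟩
    have hn : (0:ℝ) < n := by exact_mod_cast h2
    rw [le_div_iff₀ hn, one_mul] at h1
    exact h1
  apply tendsto_of_tendsto_of_tendsto_of_le_of_le' hlow hhigh
  · filter_upwards [hev] with n ⟨hn1, hn2⟩
    have hnpos : (0:ℝ) < n := by exact_mod_cast hn2
    have hψpos : (0:ℝ) < ψ n := lt_of_lt_of_le hnpos hn1
    rw [le_div_iff₀ hψpos]
    calc (1 + (1 + c) * ((n:ℝ) / (ψ n : ℝ))) * (ψ n : ℝ) = (ψ n : ℝ) + n * (1 + c) := by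
          field_simp
      _ ≤ S n := hSge n
  · filter_upwards [hev] with n ⟨hn1, hn2⟩
    have hnpos : (0:ℝ) < n := by exact_mod_cast hn2
    have hψpos : (0:ℝ) < ψ n := lt_of_lt_of_le hnpos hn1
    rw [div_le_iff₀ hψpos]
    calc S n ≤ (ψ n : ℝ) + n := hSle n
      _ = (1 + (n:ℝ) / (ψ n : ℝ)) * (ψ n : ℝ) := by
          field_simp
end
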